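/- Let G₁ and G₂ be groups, let v ∈ G₁ with v ≠ 1 and w ∈ G₂ with w ≠ 1, and set u = vw ∈ G₁ ∗ G₂ (product of the canonical images). Then for all a, b ∈ G₁ ∗ G₂ there exists N such that for every n ≥ N, the element a uⁿ b lies neither in the canonical image of G₁ nor in the canonical image of G₂. -/

import Mathlib

/-!
In the free product every element has a unique reduced word, and multiplying by a fixed element
changes the length of a reduced word by a bounded amount. The reduced word of `(v w)ⁿ` is
`v w v w ⋯ v w`, of length `2n`, so the reduced word of `a (v w)ⁿ b` is long for large `n`, whereas
elements of the factors have reduced words of length at most one.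
-/

open Monoid

namespace Monoid.CoprodI.Word

variable {ι : Type*} {M : ι → Type*} [∀ i, Monoid (M i)] [∀ i, DecidableEq (M i)]

theorem length_tail_le_length_rcons {i : ι} (p : Pair M i) :
    p.tail.toList.length ≤ (rcons p).toList.length := by
  unfold rcons; split <;> simp

theorem length_rcons_le {i : ι} (p : Pair M i) :
    (rcons p).toList.length ≤ p.tail.toList.length + 1 := by
  unfold rcons; split <;> simp

variable [DecidableEq ι]

theorem length_of_smul_le {i : ι} (m : M i) (w : Word M) :
    (of m • w).toList.length ≤ w.toList.length + 1 := by
  have h := length_tail_le_length_rcons (equivPair i w)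
  rw [← equivPair_symm, Equiv.symm_apply_apply] at h
  rw [of_smul_def]
  exact (length_rcons_le _).trans (Nat.add_le_add_right h 1)

theorem length_prod_smul_le (w' w : Word M) :
    (w'.prod • w).toList.length ≤ w'.toList.length + w.toList.length := by
  induction w' using consRecOn with
  | empty => simp
  | cons i m w' hw' hm ih =>
    rw [prod_cons, mul_smul, cons_toList, List.length_cons]
    have := length_of_smul_le m (w'.prod • w)
    omega

theorem length_smul_le (g : CoprodI M) (w : Word M) :
    (g • w).toList.length ≤ (g • (empty : Word M)).toList.length + w.toList.length := by
  simpa [prod_smul] using length_prod_smul_le (g • (empty : Word M)) w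

theorem of_mul_of_smul_eq_cons {i j : ι} (hij : i ≠ j) {x : M i} (hx : x ≠ 1) {y : M j}
    (hy : y ≠ 1) {w : Word M} (hw : w.fstIdx ≠ some j) :
    (of x * of y) • w = cons x (cons y w hw hy) (by simp [hij.symm]) hx := by
  rw [mul_smul, cons_eq_smul, cons_eq_smul]

theorem length_of_mul_of_pow_smul {i j : ι} (hij : i ≠ j) {x : M i} (hx : x ≠ 1) {y : M j}
    (hy : y ≠ 1) (n : ℕ) {w : Word M} (hw : w.fstIdx ≠ some j) :
    ((of x * of y) ^ n • w).toList.length = w.toList.length + 2 * n := by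
  induction n generalizing w with
  | zero => simp
  | succ n ih =>
    rw [pow_succ, mul_smul, of_mul_of_smul_eq_cons hij hx hy hw, ih (by simp [hij])]
    simp only [cons_toList, List.length_cons]
    ring

end Monoid.CoprodI.Word

namespace Monoid.CoprodI

theorem eventually_mul_of_mul_of_pow_mul_ne_of {ι : Type*} {G : ι → Type*} [∀ i, Group (G i)]
    {i j : ι} (hij : i ≠ j) {x : G i} (hx : x ≠ 1) {y : G j} (hy : y ≠ 1) (a b : CoprodI G) :
    ∀ᶠ n in Filter.atTop, ∀ (k : ι) (z : G k), a * (of x * of y) ^ n * b ≠ of z := by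
  classical
  let ℓ : CoprodI G → ℕ := fun g => (g • (Word.empty : Word G)).toList.length
  refine Filter.eventually_atTop.2 ⟨ℓ a⁻¹ + ℓ b⁻¹ + 1, fun n hn k z h => ?_⟩
  have hpow : (of x * of y) ^ n = a⁻¹ * (of z * b⁻¹) := by
    rw [← h]; group
  have hlen : ℓ ((of x * of y) ^ n) = 2 * n := by
    simpa [ℓ] using Word.length_of_mul_of_pow_smul hij hx hy n (w := Word.empty)
      (by simp [Word.fstIdx])
  have hle : ℓ ((of x * of y) ^ n) ≤ ℓ a⁻¹ + (1 + ℓ b⁻¹) := by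
    dsimp only [ℓ]
    rw [hpow, mul_smul, mul_smul]
    refine (Word.length_smul_le _ _).trans (Nat.add_le_add_left ?_ _)
    refine (Word.length_of_smul_le _ _).trans ?_
    simp
  omega

end Monoid.CoprodI

universe u₁ u₂

namespace Monoid.Coprod

variable {G₁ : Type u₁} {G₂ : Type u₂} [Group G₁] [Group G₂]

-- `G₁ ∗ G₂` is the indexed free product of this family; the `ULift`s put both factors
-- in one universe.
variable (G₁ G₂) in
abbrev boolFamily : Bool → Type (max u₁ u₂) := fun b => cond b (ULift.{u₂} G₁) (ULift.{u₁} G₂)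

instance : ∀ b, Group (boolFamily G₁ G₂ b)
  | true => inferInstanceAs (Group (ULift G₁))
  | false => inferInstanceAs (Group (ULift G₂))

def toCoprodI : G₁ ∗ G₂ →* CoprodI (boolFamily G₁ G₂) :=
  lift ((CoprodI.of (i := true)).comp MulEquiv.ulift.symm.toMonoidHom)
    ((CoprodI.of (i := false)).comp MulEquiv.ulift.symm.toMonoidHom)

@[simp]
theorem toCoprodI_inl (g : G₁) :
    toCoprodI (inl g : G₁ ∗ G₂) = CoprodI.of (M := boolFamily G₁ G₂) (i := true) (ULift.up g) :=
  rfl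

@[simp]
theorem toCoprodI_inr (g : G₂) :
    toCoprodI (inr g : G₁ ∗ G₂) = CoprodI.of (M := boolFamily G₁ G₂) (i := false) (ULift.up g) :=
  rfl

end Monoid.Coprod

/-- For `v ≠ 1` in `G₁`, `w ≠ 1` in `G₂` and `u = vw ∈ G₁ ∗ G₂`, for all
`a, b ∈ G₁ ∗ G₂` there is `N` such that for every `n ≥ N` the element `a * uⁿ * b` lies
neither in the canonical image of `G₁` nor in that of `G₂`. -/
theorem coprod_eventually_not_in_factors
    {G₁ G₂ : Type*} [Group G₁] [Group G₂]
    (v : G₁) (hv : v ≠ 1) (w : G₂) (hw : w ≠ 1)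
    (a b : Coprod G₁ G₂) :
    ∃ N : ℕ, ∀ n : ℕ, N ≤ n →
      a * (Coprod.inl v * Coprod.inr w) ^ n * b ∉
          Set.range (Coprod.inl : G₁ →* Coprod G₁ G₂) ∧
      a * (Coprod.inl v * Coprod.inr w) ^ n * b ∉
          Set.range (Coprod.inr : G₂ →* Coprod G₁ G₂) := by
  obtain ⟨N, hN⟩ := Filter.eventually_atTop.1 <|
    CoprodI.eventually_mul_of_mul_of_pow_mul_ne_of (G := Coprod.boolFamily G₁ G₂)
      (i := true) (j := false) (by decide) (x := ULift.up v) (mt (congrArg ULift.down) hv)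
      (y := ULift.up w) (mt (congrArg ULift.down) hw) (Coprod.toCoprodI a) (Coprod.toCoprodI b)
  refine ⟨N, fun n hn => ⟨?_, ?_⟩⟩ <;> rintro ⟨g, hg⟩
  · exact hN n hn true (ULift.up g) (by simpa using congrArg Coprod.toCoprodI hg.symm)
  · exact hN n hn false (ULift.up g) (by simpa using congrArg Coprod.toCoprodI hg.symm)
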